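/- Let γ ≥ 1 be a real number and K ≥ 1 a natural number. Let s : (Fin K → Bool) → ℝ assign a positive size to each leaf of the full binary tree of depth K (leaves indexed by length-K bit strings). For a bit string b of length j < K, let L(b) denote the sum of s(w) over all leaves w whose first j bits equal b and whose (j+1)-st bit is false, and let G(b) denote the sum of s(w) over all leaves w whose first j bits equal b and whose (j+1)-st bit is true. Suppose that for every j < K and every bit string b of length j, both L(b) and G(b) are positive and 1/γ ≤ L(b)/G(b) ≤ γ. Then for any two leaves w and w', s(w) ≤ γ^(2K) · s(w'). -/

import Mathlib

/-! Along the path to a leaf, every step keeps between `1/(1+γ)` and `γ/(1+γ)` of the current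
node's mass, since a child and its sibling are within a factor `γ` of each other. So every leaf
has mass between `T/(1+γ)^K` and `γ^K T/(1+γ)^K`, where `T` is the total mass, and any two leaves
differ by a factor at most `γ^K ≤ γ^(2K)`. -/

open Finset

namespace BalancedQuantization

section Masses

variable {K : ℕ} {α M : Type*} [Fintype α] [DecidableEq α] [AddCommMonoid M]

def prefixMass (s : (Fin K → α) → M) (j : ℕ) (b : Fin K → α) : M :=
  ∑ w ∈ univ.filter (fun w : Fin K → α => ∀ i : Fin K, (i : ℕ) < j → w i = b i), s w

def childMass (s : (Fin K → α) → M) (j : ℕ) (hj : j < K) (b : Fin K → α) (x : α) : M :=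
  ∑ w ∈ univ.filter
    (fun w : Fin K → α => (∀ i : Fin K, (i : ℕ) < j → w i = b i) ∧ w ⟨j, hj⟩ = x), s w

variable (s : (Fin K → α) → M)

theorem prefixMass_zero (b : Fin K → α) : prefixMass s 0 b = ∑ w, s w := by
  simp [prefixMass]

theorem prefixMass_self (b : Fin K → α) : prefixMass s K b = s b := by
  simp [prefixMass, ← funext_iff, filter_eq']

theorem prefixMass_succ {j : ℕ} (hj : j < K) (b : Fin K → α) :
    prefixMass s (j + 1) b = childMass s j hj b (b ⟨j, hj⟩) := by
  unfold prefixMass childMass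
  congr 1
  refine filter_congr fun w _ => ⟨fun h => ⟨fun i hi => h i (by omega), h _ (by simp)⟩, ?_⟩
  rintro ⟨hlt, hlast⟩ i hi
  rcases Nat.lt_succ_iff_lt_or_eq.mp hi with hi | rfl
  · exact hlt i hi
  · exact hlast

theorem prefixMass_eq_sum_childMass {j : ℕ} (hj : j < K) (b : Fin K → α) :
    prefixMass s j b = ∑ x, childMass s j hj b x := by
  simp only [prefixMass, childMass, ← filter_filter]
  exact (sum_fiberwise _ (fun w => w ⟨j, hj⟩) s).symm

end Masses

theorem prefixMass_eq_childMass_add_childMass_not {K : ℕ} {M : Type*} [AddCommMonoid M]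
    (s : (Fin K → Bool) → M) {j : ℕ} (hj : j < K) (b : Fin K → Bool) (x : Bool) :
    prefixMass s j b = childMass s j hj b x + childMass s j hj b (!x) := by
  rw [prefixMass_eq_sum_childMass s hj, Fintype.sum_bool]
  cases x
  · exact add_comm _ _
  · rfl

theorem inv_one_add_mul_add_le {γ c c' : ℝ} (hγ : 0 ≤ γ) (h : c' ≤ γ * c) :
    (1 + γ)⁻¹ * (c + c') ≤ c := by
  rw [inv_mul_le_iff₀ (by positivity)]
  linarith

theorem le_mul_inv_one_add_mul_add {γ c c' : ℝ} (hγ : 0 ≤ γ) (h : c ≤ γ * c') :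
    c ≤ γ * (1 + γ)⁻¹ * (c + c') := by
  rw [mul_right_comm, le_mul_inv_iff₀ (by positivity)]
  linarith

section Balanced

variable {K : ℕ}

/-- With `x` ranging over both bits this says `L ≤ γ G` and `G ≤ γ L`, the paper's
`1/γ ≤ L/G ≤ γ` without the divisions. -/
def Balanced (γ : ℝ) (s : (Fin K → Bool) → ℝ) : Prop :=
  ∀ (j : ℕ) (hj : j < K) (b : Fin K → Bool) (x : Bool),
    childMass s j hj b (!x) ≤ γ * childMass s j hj b x

variable {γ : ℝ} {s : (Fin K → Bool) → ℝ}

theorem Balanced.inv_one_add_mul_le_prefixMass_succ (hs : Balanced γ s) (hγ : 0 ≤ γ) {j : ℕ}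
    (hj : j < K) (b : Fin K → Bool) :
    (1 + γ)⁻¹ * prefixMass s j b ≤ prefixMass s (j + 1) b := by
  rw [prefixMass_succ s hj, prefixMass_eq_childMass_add_childMass_not s hj b (b ⟨j, hj⟩)]
  exact inv_one_add_mul_add_le hγ (hs j hj b _)

theorem Balanced.prefixMass_succ_le (hs : Balanced γ s) (hγ : 0 ≤ γ) {j : ℕ}
    (hj : j < K) (b : Fin K → Bool) :
    prefixMass s (j + 1) b ≤ γ * (1 + γ)⁻¹ * prefixMass s j b := by
  rw [prefixMass_succ s hj, prefixMass_eq_childMass_add_childMass_not s hj b (b ⟨j, hj⟩)]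
  refine le_mul_inv_one_add_mul_add hγ ?_
  simpa using hs j hj b (!b ⟨j, hj⟩)

theorem Balanced.inv_one_add_pow_mul_sum_le (hs : Balanced γ s) (hγ : 0 ≤ γ) (w : Fin K → Bool) :
    (1 + γ)⁻¹ ^ K * ∑ v, s v ≤ s w := by
  simpa [prefixMass_zero, prefixMass_self] using
    geom_le (u := fun j => prefixMass s j w) (by positivity) K
      fun j hj => hs.inv_one_add_mul_le_prefixMass_succ hγ hj w

theorem Balanced.le_pow_mul_sum (hs : Balanced γ s) (hγ : 0 ≤ γ) (w : Fin K → Bool) :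
    s w ≤ (γ * (1 + γ)⁻¹) ^ K * ∑ v, s v := by
  simpa [prefixMass_zero, prefixMass_self] using
    le_geom (u := fun j => prefixMass s j w) (by positivity) K
      fun j hj => hs.prefixMass_succ_le hγ hj w

theorem Balanced.le_pow_mul (hs : Balanced γ s) (hγ : 0 ≤ γ) (w w' : Fin K → Bool) :
    s w ≤ γ ^ K * s w' :=
  calc s w ≤ (γ * (1 + γ)⁻¹) ^ K * ∑ v, s v := hs.le_pow_mul_sum hγ w
    _ = γ ^ K * ((1 + γ)⁻¹ ^ K * ∑ v, s v) := by rw [mul_pow, mul_assoc]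
    _ ≤ γ ^ K * s w' := by gcongr; exact hs.inv_one_add_pow_mul_sum_le hγ w'

end Balanced

end BalancedQuantization

open BalancedQuantization in
theorem balanced_quantization_ratio_bound_general
    (γ : ℝ) (hγ : 1 ≤ γ) (K : ℕ)
    (s : (Fin K → Bool) → ℝ) (hs : ∀ w, 0 < s w)
    (hbal : ∀ (j : ℕ) (hj : j < K) (b : Fin K → Bool),
      letI L : ℝ := ∑ w ∈ univ.filter
        (fun w : Fin K → Bool =>
          (∀ i : Fin K, (i : ℕ) < j → w i = b i) ∧ w ⟨j, hj⟩ = false), s w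
      letI G : ℝ := ∑ w ∈ univ.filter
        (fun w : Fin K → Bool =>
          (∀ i : Fin K, (i : ℕ) < j → w i = b i) ∧ w ⟨j, hj⟩ = true), s w
      0 < L ∧ 0 < G ∧ 1 / γ ≤ L / G ∧ L / G ≤ γ) :
    ∀ w w' : Fin K → Bool, s w ≤ γ ^ (2 * K) * s w' := by
  have hγ0 : 0 < γ := by linarith
  have hbalanced : Balanced γ s := by
    intro j hj b x
    obtain ⟨-, hG, hlow, hhigh⟩ := hbal j hj b
    cases x
    · have hGL := (div_le_div_iff₀ hγ0 hG).1 hlow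
      change childMass s j hj b true ≤ γ * childMass s j hj b false
      unfold childMass
      linarith
    · exact (div_le_iff₀ hG).1 hhigh
  intro w w'
  calc s w ≤ γ ^ K * s w' := hbalanced.le_pow_mul hγ0.le w w'
    _ ≤ γ ^ (2 * K) * s w' := by gcongr; exacts [(hs w').le, by omega]

/-- **Proposition 1 (Balanced Quantization).**
Leaves of the full binary tree of depth `K` are indexed by bit strings
`w : Fin K → Bool`, each with a positive size `s w`.  For a prefix `b` of
length `j < K`, `L` is the total size of leaves extending `b` with next bit
`false` and `G` the total size of those with next bit `true`.  If at every
node `1/γ ≤ L/G ≤ γ` (with `L, G > 0`), then any leaf size is at most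
`γ ^ (2 * K)` times any other leaf size. -/
theorem balanced_quantization_ratio_bound
    (γ : ℝ) (hγ : 1 ≤ γ) (K : ℕ) (hK : 1 ≤ K)
    (s : (Fin K → Bool) → ℝ) (hs : ∀ w, 0 < s w)
    (hbal : ∀ (j : ℕ) (hj : j < K) (b : Fin K → Bool),
      letI L : ℝ := ∑ w ∈ univ.filter
        (fun w : Fin K → Bool =>
          (∀ i : Fin K, (i : ℕ) < j → w i = b i) ∧ w ⟨j, hj⟩ = false), s w
      letI G : ℝ := ∑ w ∈ univ.filter
        (fun w : Fin K → Bool =>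
          (∀ i : Fin K, (i : ℕ) < j → w i = b i) ∧ w ⟨j, hj⟩ = true), s w
      0 < L ∧ 0 < G ∧ 1 / γ ≤ L / G ∧ L / G ≤ γ) :
    ∀ w w' : Fin K → Bool, s w ≤ γ ^ (2 * K) * s w' :=
  balanced_quantization_ratio_bound_general γ hγ K s hs hbal
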